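/- Assume Dynamics Smoothness holds. For θ ∈ ℝ^{|J|}, let y_θ : [0,T] → ℝⁿ be a solution of the initial-value problem ẏ(t) = F(y(t),t), y_I(0) = b_I, y_J(0) = x_J(0) + θ, satisfying ‖y_θ(t) − x(t)‖ ≤ e^{Lt}‖θ‖ for all t ∈ [0,T], and let z_θ : [0,T] → ℝⁿ solve the linearized problem ż(t) = ∇ₓF(x(t),t)z(t) for t ≠ s, z_I(0) = 0, z_J(0) = θ. Then there exist constants c and r̄ > 0, independent of θ, such that whenever ‖θ‖ ≤ r̄, one has ‖y_θ(t) − x(t) − z_θ(t)‖ ≤ c‖θ‖² for all t ∈ [0,T]. -/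

import Mathlib

/-!
The error `w = y - x - z` vanishes at `0` and, away from the switch, satisfies
`ẇ = ∇ₓF(x) w + R` with Taylor remainder `‖R‖ ≤ L ‖y - x‖² ≤ |L| e^{2|L|T} ‖θ‖²`, valid as long as
`y` stays in the tube, which `‖θ‖ ≤ ρ e^{-|L|T}` guarantees. Grönwall's inequality on `[0, s]`, and
then on `[s, T]` restarted from `w s`, bounds `‖w‖` by a multiple of `‖θ‖²`; the growth rate is a
bound for `‖∇ₓF(x t, t)‖`, which is continuous along the compact trajectory.
-/

open Set Metric

/-- **Dynamics Smoothness** for a dynamics `Fd` with spatial Jacobian `DFd`, on the tube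
`{(χ,t) : t ∈ [a,b], ‖χ - x t‖ ≤ ρ}` around the trajectory `x` :
`Fd` is continuously differentiable on the tube, and `χ ↦ DFd χ t` is Lipschitz
with constant `L`, uniformly in `t`. -/
structure DynSmooth (n : ℕ) (Fd : (Fin n → ℝ) → ℝ → Fin n → ℝ)
    (DFd : (Fin n → ℝ) → ℝ → (Fin n → ℝ) →L[ℝ] (Fin n → ℝ))
    (x : ℝ → Fin n → ℝ) (a b ρ L : ℝ) : Prop where
  contDiffOn : ContDiffOn ℝ 1 (fun p : (Fin n → ℝ) × ℝ => Fd p.1 p.2)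
    {p : (Fin n → ℝ) × ℝ | p.2 ∈ Icc a b ∧ ‖p.1 - x p.2‖ ≤ ρ}
  hasFDeriv : ∀ χ t, t ∈ Icc a b → ‖χ - x t‖ ≤ ρ →
    HasFDerivAt (fun y => Fd y t) (DFd χ t) χ
  contDeriv : ContinuousOn (fun p : (Fin n → ℝ) × ℝ => DFd p.1 p.2)
    {p : (Fin n → ℝ) × ℝ | p.2 ∈ Icc a b ∧ ‖p.1 - x p.2‖ ≤ ρ}
  lip : ∀ t χ₁ χ₂, t ∈ Icc a b → ‖χ₁ - x t‖ ≤ ρ → ‖χ₂ - x t‖ ≤ ρ →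
    ‖DFd χ₁ t - DFd χ₂ t‖ ≤ L * ‖χ₁ - χ₂‖

open Filter Topology Real

theorem continuous_gronwallBound (K ε : ℝ) :
    Continuous fun p : ℝ × ℝ => gronwallBound p.1 K ε p.2 := by
  by_cases hK : K = 0
  · simp only [gronwallBound_K0, hK]
    fun_prop
  · simp only [gronwallBound_of_K_ne_0 hK]
    fun_prop

theorem gronwallBound_le_mul_exp {δ K ε x T : ℝ} (hδ : 0 ≤ δ) (hK : 0 < K) (hε : 0 ≤ ε)
    (hxT : x ≤ T) : gronwallBound δ K ε x ≤ (δ + ε / K) * exp (K * T) := by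
  calc gronwallBound δ K ε x ≤ gronwallBound δ K ε T := gronwallBound_mono hδ hε hK.le hxT
    _ = (δ + ε / K) * exp (K * T) - ε / K := by
      rw [gronwallBound_of_K_ne_0 hK.ne']
      ring
    _ ≤ (δ + ε / K) * exp (K * T) := sub_le_self _ (by positivity)

section Gronwall

variable {E : Type*} [NormedAddCommGroup E] [NormedSpace ℝ E]

theorem norm_le_gronwallBound_of_norm_deriv_right_le_Ioo {f f' : ℝ → E} {K ε a b : ℝ}
    (hf : ContinuousOn f (Icc a b)) (hf' : ∀ t ∈ Ioo a b, HasDerivWithinAt f (f' t) (Ici t) t)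
    (bound : ∀ t ∈ Ioo a b, ‖f' t‖ ≤ K * ‖f t‖ + ε) :
    ∀ t ∈ Icc a b, ‖f t‖ ≤ gronwallBound ‖f a‖ K ε (t - a) := by
  intro t ht
  rcases ht.1.eq_or_lt with rfl | hat
  · rw [sub_self, gronwallBound_x0]
  have hstart : ∀ a' ∈ Ioo a t, ‖f t‖ ≤ gronwallBound ‖f a'‖ K ε (t - a') := fun a' ha' =>
    norm_le_gronwallBound_of_norm_deriv_right_le (hf.mono (Icc_subset_Icc ha'.1.le le_rfl))
      (fun u hu => hf' u ⟨ha'.1.trans_le hu.1, hu.2⟩) le_rfl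
      (fun u hu => bound u ⟨ha'.1.trans_le hu.1, hu.2⟩) t ⟨ha'.2.le, ht.2⟩
  -- The bound restarted at `a' > a` passes to the limit `a' → a` by continuity of `f` at `a`.
  have hf_a : ContinuousWithinAt f (Ioo a t) a :=
    (hf a ⟨le_rfl, hat.le.trans ht.2⟩).mono fun u hu => ⟨hu.1.le, hu.2.le.trans ht.2⟩
  have hbound_a : ContinuousWithinAt (fun a' => gronwallBound ‖f a'‖ K ε (t - a')) (Ioo a t) a :=
    (continuous_gronwallBound K ε).continuousAt.comp_continuousWithinAt
      (hf_a.norm.prodMk (continuousWithinAt_const.sub continuousWithinAt_id))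
  exact ContinuousWithinAt.closure_le (f := fun _ => ‖f t‖)
    (g := fun a' => gronwallBound ‖f a'‖ K ε (t - a'))
    (by rw [closure_Ioo hat.ne]; exact left_mem_Icc.2 hat.le) continuousWithinAt_const
    hbound_a hstart

theorem norm_le_of_norm_deriv_le_of_switch {f f₀' f₁' : ℝ → E} {K ε a s b : ℝ}
    (hK : 0 < K) (hε : 0 ≤ ε) (has : a ≤ s) (hsb : s ≤ b) (hf : ContinuousOn f (Icc a b))
    (ha : f a = 0)
    (hf₀ : ∀ t ∈ Ioo a s, HasDerivWithinAt f (f₀' t) (Icc a b) t)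
    (hf₁ : ∀ t ∈ Ioo s b, HasDerivWithinAt f (f₁' t) (Icc a b) t)
    (bound₀ : ∀ t ∈ Ioo a s, ‖f₀' t‖ ≤ K * ‖f t‖ + ε)
    (bound₁ : ∀ t ∈ Ioo s b, ‖f₁' t‖ ≤ K * ‖f t‖ + ε) :
    ∀ t ∈ Icc a b, ‖f t‖ ≤ ε / K * (exp (K * (b - a)) + 1) * exp (K * (b - a)) := by
  have hIci : ∀ {f' t}, t ∈ Ioo a b → HasDerivWithinAt f f' (Icc a b) t →
      HasDerivWithinAt f f' (Ici t) t := fun ht h =>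
    (h.hasDerivAt (Icc_mem_nhds ht.1 ht.2)).hasDerivWithinAt
  have hexp : 1 ≤ exp (K * (b - a)) := one_le_exp (mul_nonneg hK.le (by linarith))
  have hleft : ∀ t ∈ Icc a s, ‖f t‖ ≤ ε / K * exp (K * (b - a)) := fun t ht => by
    have := norm_le_gronwallBound_of_norm_deriv_right_le_Ioo
      (hf.mono (Icc_subset_Icc_right hsb))
      (fun u hu => hIci ⟨hu.1, hu.2.trans_le hsb⟩ (hf₀ u hu)) bound₀ t ht
    rw [ha, norm_zero] at this
    simpa using this.trans (gronwallBound_le_mul_exp le_rfl hK hε (by linarith [ht.2]))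
  intro t ht
  rcases le_total t s with hts | hst
  · calc ‖f t‖ ≤ ε / K * exp (K * (b - a)) := hleft t ⟨ht.1, hts⟩
      _ ≤ ε / K * (exp (K * (b - a)) + 1) * exp (K * (b - a)) := by
        have : 0 ≤ ε / K * exp (K * (b - a)) := by positivity
        nlinarith
  · calc ‖f t‖ ≤ gronwallBound ‖f s‖ K ε (t - s) :=
          norm_le_gronwallBound_of_norm_deriv_right_le_Ioo
            (hf.mono (Icc_subset_Icc_left has))
            (fun u hu => hIci ⟨has.trans_lt hu.1, hu.2⟩ (hf₁ u hu)) bound₁ t ⟨hst, ht.2⟩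
      _ ≤ (‖f s‖ + ε / K) * exp (K * (b - a)) :=
          gronwallBound_le_mul_exp (norm_nonneg _) hK hε (by linarith [ht.2])
      _ ≤ ε / K * (exp (K * (b - a)) + 1) * exp (K * (b - a)) := by
        have := hleft s ⟨has, le_rfl⟩
        gcongr
        linarith

end Gronwall

namespace DynSmooth

variable {n : ℕ} {Fd : (Fin n → ℝ) → ℝ → Fin n → ℝ}
  {DFd : (Fin n → ℝ) → ℝ → (Fin n → ℝ) →L[ℝ] (Fin n → ℝ)} {x : ℝ → Fin n → ℝ} {a b ρ L : ℝ}

theorem norm_sub_sub_apply_sub_le (hds : DynSmooth n Fd DFd x a b ρ L) {t : ℝ}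
    (ht : t ∈ Icc a b) {χ : Fin n → ℝ} (hχ : ‖χ - x t‖ ≤ ρ) :
    ‖Fd χ t - Fd (x t) t - DFd (x t) t (χ - x t)‖ ≤ L * ‖χ - x t‖ ^ 2 := by
  rcases eq_or_ne χ (x t) with rfl | hne
  · simp
  have hρ : 0 ≤ ρ := (norm_nonneg _).trans hχ
  have hxt : ‖x t - x t‖ ≤ ρ := by simpa using hρ
  have hL : 0 ≤ L := nonneg_of_mul_nonneg_left
    ((norm_nonneg _).trans (hds.lip t χ (x t) ht hχ hxt)) (norm_pos_iff.2 (sub_ne_zero.2 hne))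
  have hball : ∀ p ∈ closedBall (x t) ‖χ - x t‖, ‖p - x t‖ ≤ ρ := fun p hp =>
    (mem_closedBall_iff_norm.1 hp).trans hχ
  have hderiv_close : ∀ p ∈ closedBall (x t) ‖χ - x t‖,
      ‖DFd p t - DFd (x t) t‖ ≤ L * ‖χ - x t‖ := fun p hp =>
    (hds.lip t p (x t) ht (hball p hp) hxt).trans
      (mul_le_mul_of_nonneg_left (mem_closedBall_iff_norm.1 hp) hL)
  calc ‖Fd χ t - Fd (x t) t - DFd (x t) t (χ - x t)‖ ≤ L * ‖χ - x t‖ * ‖χ - x t‖ :=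
        (convex_closedBall _ _).norm_image_sub_le_of_norm_hasFDerivWithin_le'
          (fun p hp => (hds.hasFDeriv p t ht (hball p hp)).hasFDerivWithinAt) hderiv_close
          (mem_closedBall_self (norm_nonneg _)) (mem_closedBall_iff_norm.2 le_rfl)
    _ = L * ‖χ - x t‖ ^ 2 := by ring

theorem norm_sub_sub_apply_le (hds : DynSmooth n Fd DFd x a b ρ L) {t K : ℝ}
    (ht : t ∈ Icc a b) {χ : Fin n → ℝ} (hχ : ‖χ - x t‖ ≤ ρ) (hK : ‖DFd (x t) t‖ ≤ K)
    (ζ : Fin n → ℝ) :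
    ‖Fd χ t - Fd (x t) t - DFd (x t) t ζ‖ ≤ K * ‖χ - x t - ζ‖ + L * ‖χ - x t‖ ^ 2 := by
  set A := DFd (x t) t
  have hsplit : Fd χ t - Fd (x t) t - A ζ
      = A (χ - x t - ζ) + (Fd χ t - Fd (x t) t - A (χ - x t)) := by
    simp only [map_sub]
    abel
  rw [hsplit]
  exact (norm_add_le _ _).trans (add_le_add (A.le_of_opNorm_le hK _)
    (hds.norm_sub_sub_apply_sub_le ht hχ))

theorem exists_bound_along {a' b' : ℝ} (hds : DynSmooth n Fd DFd x a b ρ L)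
    (hx : ContinuousOn x (Icc a' b')) (hsub : Icc a' b' ⊆ Icc a b) (hρ : 0 ≤ ρ) :
    ∃ K, ∀ t ∈ Icc a' b', ‖DFd (x t) t‖ ≤ K :=
  isCompact_Icc.exists_bound_of_continuousOn <| hds.contDeriv.comp (hx.prodMk continuousOn_id)
    fun t ht => ⟨hsub ht, by simpa using hρ⟩

end DynSmooth

theorem norm_sub_sub_le_of_switched_dynamics {n : ℕ} {T s ρ L K ε : ℝ} (hs : s ∈ Ioo 0 T)
    (hK : 0 < K) (hε : 0 ≤ ε) {F₀ F₁ : (Fin n → ℝ) → ℝ → Fin n → ℝ}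
    {DF₀ DF₁ : (Fin n → ℝ) → ℝ → (Fin n → ℝ) →L[ℝ] (Fin n → ℝ)} {x y z : ℝ → Fin n → ℝ}
    (hds₀ : DynSmooth n F₀ DF₀ x 0 (s + ρ) ρ L) (hds₁ : DynSmooth n F₁ DF₁ x (s - ρ) T ρ L)
    (hK₀ : ∀ t ∈ Icc 0 s, ‖DF₀ (x t) t‖ ≤ K) (hK₁ : ∀ t ∈ Icc s T, ‖DF₁ (x t) t‖ ≤ K)
    (hxc : ContinuousOn x (Icc 0 T))
    (hx₀ : ∀ t ∈ Ico 0 s, HasDerivWithinAt x (F₀ (x t) t) (Icc 0 T) t)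
    (hx₁ : ∀ t ∈ Ioc s T, HasDerivWithinAt x (F₁ (x t) t) (Icc 0 T) t)
    (hyc : ContinuousOn y (Icc 0 T))
    (hy₀ : ∀ t ∈ Ico 0 s, HasDerivWithinAt y (F₀ (y t) t) (Icc 0 T) t)
    (hy₁ : ∀ t ∈ Ioc s T, HasDerivWithinAt y (F₁ (y t) t) (Icc 0 T) t)
    (hzc : ContinuousOn z (Icc 0 T))
    (hz : ∀ t ∈ Icc 0 T, t ≠ s → HasDerivWithinAt z
      ((if t < s then DF₀ (x t) t else DF₁ (x t) t) (z t)) (Icc 0 T) t)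
    (h0 : y 0 - x 0 - z 0 = 0) (hyxρ : ∀ t ∈ Icc 0 T, ‖y t - x t‖ ≤ ρ)
    (hyxε : ∀ t ∈ Icc 0 T, L * ‖y t - x t‖ ^ 2 ≤ ε) :
    ∀ t ∈ Icc 0 T, ‖y t - x t - z t‖ ≤ ε / K * (exp (K * T) + 1) * exp (K * T) := by
  obtain ⟨hs0, hsT⟩ := hs
  have hρ : 0 ≤ ρ := (norm_nonneg _).trans (hyxρ s ⟨hs0.le, hsT.le⟩)
  have hmem₀ : ∀ t ∈ Ioo 0 s, t ∈ Icc 0 T := fun t ht => ⟨ht.1.le, (ht.2.trans hsT).le⟩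
  have hmem₁ : ∀ t ∈ Ioo s T, t ∈ Icc 0 T := fun t ht => ⟨(hs0.trans ht.1).le, ht.2.le⟩
  simpa only [sub_zero] using norm_le_of_norm_deriv_le_of_switch (f := fun t => y t - x t - z t)
    (f₀' := fun t => F₀ (y t) t - F₀ (x t) t - DF₀ (x t) t (z t))
    (f₁' := fun t => F₁ (y t) t - F₁ (x t) t - DF₁ (x t) t (z t))
    hK hε hs0.le hsT.le ((hyc.sub hxc).sub hzc) h0
    (fun t ht => ((hy₀ t ⟨ht.1.le, ht.2⟩).sub (hx₀ t ⟨ht.1.le, ht.2⟩)).sub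
      (by simpa only [if_pos ht.2] using hz t (hmem₀ t ht) ht.2.ne))
    (fun t ht => ((hy₁ t ⟨ht.1, ht.2.le⟩).sub (hx₁ t ⟨ht.1, ht.2.le⟩)).sub
      (by simpa only [if_neg (not_lt.2 ht.1.le)] using hz t (hmem₁ t ht) ht.1.ne'))
    (fun t ht => (hds₀.norm_sub_sub_apply_le ⟨ht.1.le, by linarith [ht.2]⟩
      (hyxρ t (hmem₀ t ht)) (hK₀ t (Ioo_subset_Icc_self ht)) _).trans
      (by linarith [hyxε t (hmem₀ t ht)]))
    (fun t ht => (hds₁.norm_sub_sub_apply_le ⟨by linarith [ht.1], ht.2.le⟩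
      (hyxρ t (hmem₁ t ht)) (hK₁ t (Ioo_subset_Icc_self ht)) _).trans
      (by linarith [hyxε t (hmem₁ t ht)]))

theorem linearization_quadratic_error_general
    {n : ℕ} (T s ρ L : ℝ) (hs : s ∈ Ioo 0 T) (hρ : 0 < ρ)
    (I : Finset (Fin n)) (bI : Fin n → ℝ)
    (F₀ F₁ : (Fin n → ℝ) → ℝ → Fin n → ℝ)
    (DF₀ DF₁ : (Fin n → ℝ) → ℝ → (Fin n → ℝ) →L[ℝ] (Fin n → ℝ))
    (x : ℝ → Fin n → ℝ)
    -- `x` solves the switched dynamics with initial condition `x_I(0) = b_I`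
    (hxc : ContinuousOn x (Icc 0 T))
    (hx₀ : ∀ t ∈ Ico 0 s, HasDerivWithinAt x (F₀ (x t) t) (Icc 0 T) t)
    (hx₁ : ∀ t ∈ Ioc s T, HasDerivWithinAt x (F₁ (x t) t) (Icc 0 T) t)
    (hxI : ∀ i ∈ I, x 0 i = bI i)
    -- Dynamics Smoothness on the two tubes
    (hds₀ : DynSmooth n F₀ DF₀ x 0 (s + ρ) ρ L)
    (hds₁ : DynSmooth n F₁ DF₁ x (s - ρ) T ρ L) :
    ∃ c : ℝ, ∃ r > (0 : ℝ), ∀ θ : {j // j ∈ Iᶜ} → ℝ, ‖θ‖ ≤ r →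
      ∀ y z : ℝ → Fin n → ℝ,
      -- `y = y_θ` solves the initial-value problem with initial data
      -- `y_I(0) = b_I`, `y_J(0) = x_J(0) + θ`, and satisfies `‖y - x‖ ≤ e^{Lt}‖θ‖`
      ContinuousOn y (Icc 0 T) →
      (∀ t ∈ Ico 0 s, HasDerivWithinAt y (F₀ (y t) t) (Icc 0 T) t) →
      (∀ t ∈ Ioc s T, HasDerivWithinAt y (F₁ (y t) t) (Icc 0 T) t) →
      (∀ i ∈ I, y 0 i = bI i) →
      (∀ j : {j // j ∈ Iᶜ}, y 0 j.1 = x 0 j.1 + θ j) →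
      (∀ t ∈ Icc 0 T, ‖y t - x t‖ ≤ Real.exp (L * t) * ‖θ‖) →
      -- `z = z_θ` solves the linearized problem `ż = ∇ₓF(x(t),t) z` with
      -- `z_I(0) = 0`, `z_J(0) = θ`
      ContinuousOn z (Icc 0 T) →
      (∀ t ∈ Icc 0 T, t ≠ s → HasDerivWithinAt z
        ((if t < s then DF₀ (x t) t else DF₁ (x t) t) (z t)) (Icc 0 T) t) →
      (∀ i ∈ I, z 0 i = 0) →
      (∀ j : {j // j ∈ Iᶜ}, z 0 j.1 = θ j) →
      -- conclusion: `‖y_θ(t) - x(t) - z_θ(t)‖ ≤ c ‖θ‖²` on `[0,T]`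
      ∀ t ∈ Icc 0 T, ‖y t - x t - z t‖ ≤ c * ‖θ‖ ^ 2 := by
  obtain ⟨K₀, hK₀⟩ := hds₀.exists_bound_along (hxc.mono (Icc_subset_Icc_right hs.2.le))
    (Icc_subset_Icc_right (by linarith)) hρ.le
  obtain ⟨K₁, hK₁⟩ := hds₁.exists_bound_along (hxc.mono (Icc_subset_Icc_left hs.1.le))
    (Icc_subset_Icc_left (by linarith)) hρ.le
  set K := max (max K₀ K₁) 1
  set M := exp (|L| * T)
  refine ⟨|L| * M ^ 2 / K * (exp (K * T) + 1) * exp (K * T), ρ / M, by positivity, ?_⟩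
  intro θ hθ y z hyc hy₀ hy₁ hyI hyJ hyx hzc hz hzI hzJ
  have hyxM : ∀ t ∈ Icc 0 T, ‖y t - x t‖ ≤ M * ‖θ‖ := fun t ht =>
    (hyx t ht).trans <| by
      gcongr
      exact exp_le_exp.2 (by nlinarith [le_abs_self L, abs_nonneg L, ht.1, ht.2])
  have hyxρ : ∀ t ∈ Icc 0 T, ‖y t - x t‖ ≤ ρ := fun t ht =>
    (hyxM t ht).trans <| by rwa [← le_div_iff₀' (exp_pos _)]
  have hquad : ∀ t ∈ Icc 0 T, L * ‖y t - x t‖ ^ 2 ≤ |L| * M ^ 2 * ‖θ‖ ^ 2 := fun t ht =>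
    calc L * ‖y t - x t‖ ^ 2 ≤ |L| * (M * ‖θ‖) ^ 2 := by
          gcongr
          · exact le_abs_self L
          · exact hyxM t ht
      _ = |L| * M ^ 2 * ‖θ‖ ^ 2 := by ring
  have hw0 : y 0 - x 0 - z 0 = 0 := by
    funext i
    by_cases hi : i ∈ I
    · simp [hyI i hi, hzI i hi, hxI i hi]
    · simp [hyJ ⟨i, Finset.mem_compl.2 hi⟩, hzJ ⟨i, Finset.mem_compl.2 hi⟩]
  intro t ht
  convert norm_sub_sub_le_of_switched_dynamics hs (K := K) (by positivity) (by positivity) hds₀ hds₁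
    (fun t ht => (hK₀ t ht).trans (by simp [K])) (fun t ht => (hK₁ t ht).trans (by simp [K]))
    hxc hx₀ hx₁ hyc hy₀ hy₁ hzc hz hw0 hyxρ hquad t ht using 1
  ring

/-- the linearized problem gives an `O(‖θ‖²)` approximation to the
perturbation of the trajectory induced by perturbing the free initial components. -/
theorem linearization_quadratic_error
    {n : ℕ} (hn : 0 < n) (T s ρ L : ℝ) (hT : 0 < T) (hs : s ∈ Ioo 0 T) (hρ : 0 < ρ)
    (I : Finset (Fin n)) (bI : Fin n → ℝ)
    (F₀ F₁ : (Fin n → ℝ) → ℝ → Fin n → ℝ)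
    (DF₀ DF₁ : (Fin n → ℝ) → ℝ → (Fin n → ℝ) →L[ℝ] (Fin n → ℝ))
    (x : ℝ → Fin n → ℝ)
    -- `x` solves the switched dynamics with initial condition `x_I(0) = b_I`
    (hxc : ContinuousOn x (Icc 0 T))
    (hx₀ : ∀ t ∈ Ico 0 s, HasDerivWithinAt x (F₀ (x t) t) (Icc 0 T) t)
    (hx₁ : ∀ t ∈ Ioc s T, HasDerivWithinAt x (F₁ (x t) t) (Icc 0 T) t)
    (hxI : ∀ i ∈ I, x 0 i = bI i)
    -- Dynamics Smoothness on the two tubes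
    (hds₀ : DynSmooth n F₀ DF₀ x 0 (s + ρ) ρ L)
    (hds₁ : DynSmooth n F₁ DF₁ x (s - ρ) T ρ L) :
    ∃ c : ℝ, ∃ r > (0 : ℝ), ∀ θ : {j // j ∈ Iᶜ} → ℝ, ‖θ‖ ≤ r →
      ∀ y z : ℝ → Fin n → ℝ,
      -- `y = y_θ` solves the initial-value problem with initial data
      -- `y_I(0) = b_I`, `y_J(0) = x_J(0) + θ`, and satisfies `‖y - x‖ ≤ e^{Lt}‖θ‖`
      ContinuousOn y (Icc 0 T) →
      (∀ t ∈ Ico 0 s, HasDerivWithinAt y (F₀ (y t) t) (Icc 0 T) t) →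
      (∀ t ∈ Ioc s T, HasDerivWithinAt y (F₁ (y t) t) (Icc 0 T) t) →
      (∀ i ∈ I, y 0 i = bI i) →
      (∀ j : {j // j ∈ Iᶜ}, y 0 j.1 = x 0 j.1 + θ j) →
      (∀ t ∈ Icc 0 T, ‖y t - x t‖ ≤ Real.exp (L * t) * ‖θ‖) →
      -- `z = z_θ` solves the linearized problem `ż = ∇ₓF(x(t),t) z` with
      -- `z_I(0) = 0`, `z_J(0) = θ`
      ContinuousOn z (Icc 0 T) →
      (∀ t ∈ Icc 0 T, t ≠ s → HasDerivWithinAt z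
        ((if t < s then DF₀ (x t) t else DF₁ (x t) t) (z t)) (Icc 0 T) t) →
      (∀ i ∈ I, z 0 i = 0) →
      (∀ j : {j // j ∈ Iᶜ}, z 0 j.1 = θ j) →
      -- conclusion: `‖y_θ(t) - x(t) - z_θ(t)‖ ≤ c ‖θ‖²` on `[0,T]`
      ∀ t ∈ Icc 0 T, ‖y t - x t - z t‖ ≤ c * ‖θ‖ ^ 2 :=
  linearization_quadratic_error_general T s ρ L hs hρ I bI F₀ F₁ DF₀ DF₁ x hxc hx₀ hx₁ hxI hds₀ hds₁
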